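/- arXiv:math/0503724 — 5 statements merged into one kernel-verified Lean document; each statement's English description precedes it below -/
import Mathlib

section
/- Let A be a finitely generated abelian topological group isomorphic to ℝ^d × ℤ^e, let W be a finite group of automorphisms of A, and let A₁, …, Aₙ be finitely many nontrivial subgroups of A. Then there exists a nonzero compactly supported distribution f on A (in fact a finite linear combination of point masses) which is W-invariant and vanishes when evaluated on any function that is invariant under translation by some Aᵢ. -/
/-!
Work in the group algebra `ℂ[A]`, where a finitely supported `c` pairs with a test function `g`
as `∑ₐ c(a) g(a)`. Choose `aᵢ ∈ Aᵢ \ {0}` and take `c = ∏ᵢ ∏_{w ∈ W} (1 - δ_{w aᵢ})`.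
Composing with `w ∈ W` only permutes the factors, so `c` is `W`-invariant. The factor
`1 - δ_{aᵢ}` divides `c`, and `(1 - δ_b) * μ` pairs to zero with every `b`-periodic function.
Finally `c ≠ 0` because `ℂ[ℝ^d × ℤ^e]` has no zero divisors (the group is torsion free).
-/

open AddMonoidAlgebra Finsupp

namespace AddMonoidAlgebra

lemma linearCombination_comp_coeff {k M N : Type*} [Semiring k] (g : N → k) (f : M → N)
    (x : k[M]) :
    linearCombination k (g ∘ f) x.coeff = linearCombination k g (mapDomain f x).coeff := by
  rw [coeff_mapDomain, linearCombination_mapDomain]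

section Ring

variable {k G : Type*} [Ring k] [AddMonoid G]

lemma linearCombination_coeff_single_one_mul (g : G → k) (b : G) (x : k[G]) :
    linearCombination k g (single b 1 * x).coeff =
      linearCombination k (fun y => g (b + y)) x.coeff := by
  induction x using AddMonoidAlgebra.induction_linear with
  | zero => simp
  | add x y hx hy => simp only [mul_add, coeff_add, map_add, hx, hy]
  | single y r => simp [single_mul_single, coeff_single]

lemma linearCombination_coeff_eq_zero_of_dvd {g : G → k} {b : G} (hg : ∀ y, g (b + y) = g y)
    {x : k[G]} (hx : (1 - single b 1) ∣ x) : linearCombination k g x.coeff = 0 := by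
  obtain ⟨μ, rfl⟩ := hx
  have hg' : (fun y => g (b + y)) = g := funext hg
  rw [sub_mul, one_mul, coeff_sub, map_sub, linearCombination_coeff_single_one_mul, hg', sub_self]

lemma one_sub_single_one_ne_zero [Nontrivial k] {b : G} (hb : b ≠ 0) :
    (1 - single b 1 : k[G]) ≠ 0 := by
  rw [sub_ne_zero, one_def, Ne, single_left_inj one_ne_zero]
  exact hb.symm

end Ring

variable {k G ι : Type*} [CommRing k] [AddCommMonoid G] [Fintype ι]

noncomputable def orbitAnnihilator (S : Finset (AddAut G)) (a : ι → G) :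
    k[G] :=
  ∏ i, ∏ w ∈ S, (1 - single (w (a i)) 1)

lemma one_sub_single_dvd_orbitAnnihilator {S : Finset (AddAut G)} (hS : 0 ∈ S) (a : ι → G)
    (i : ι) : (1 - single (a i) 1 : k[G]) ∣ orbitAnnihilator S a :=
  (Finset.dvd_prod_of_mem (fun w : AddAut G => (1 - single (w (a i)) 1 : k[G])) hS).trans
    (Finset.dvd_prod_of_mem _ (Finset.mem_univ i))

lemma orbitAnnihilator_ne_zero [Nontrivial k] [NoZeroDivisors k[G]] (S : Finset (AddAut G))
    {a : ι → G} (ha : ∀ i, a i ≠ 0) : (orbitAnnihilator S a : k[G]) ≠ 0 :=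
  Finset.prod_ne_zero_iff.mpr fun i _ => Finset.prod_ne_zero_iff.mpr fun w _ =>
    one_sub_single_one_ne_zero ((map_ne_zero_iff w w.injective).mpr (ha i))

lemma mapDomain_orbitAnnihilator {W : AddSubgroup (AddAut G)} (hW : (W : Set (AddAut G)).Finite)
    {w : AddAut G} (hw : w ∈ W) (a : ι → G) :
    mapDomain w (orbitAnnihilator hW.toFinset a : k[G]) = orbitAnnihilator hW.toFinset a := by
  change mapDomainRingHom k (w : G →+ G) _ = _
  simp only [orbitAnnihilator, map_prod, map_sub, map_one]
  refine Finset.prod_congr rfl fun i _ => ?_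
  refine Finset.prod_nbij' (w + ·) (-w + ·) ?_ ?_ ?_ ?_ ?_
  · simpa using fun v hv => W.add_mem hw hv
  · simpa using fun v hv => W.add_mem (W.neg_mem hw) hv
  · simp
  · simp
  · intro v _
    exact congrArg (1 - ·) (mapDomain_single ..)

end AddMonoidAlgebra

theorem stmt0_general (d e n : ℕ)
    (W : AddSubgroup (AddAut ((Fin d → ℝ) × (Fin e → ℤ))))
    (hWfin : (W : Set (AddAut ((Fin d → ℝ) × (Fin e → ℤ)))).Finite)
    (A : Fin n → AddSubgroup ((Fin d → ℝ) × (Fin e → ℤ)))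
    (hA : ∀ i, A i ≠ ⊥) :
    ∃ c : ((Fin d → ℝ) × (Fin e → ℤ)) →₀ ℂ,
      c ≠ 0 ∧
      (∀ w ∈ W, ∀ g : ((Fin d → ℝ) × (Fin e → ℤ)) → ℂ,
        (c.sum fun a v => v * g (w a)) = c.sum fun a v => v * g a) ∧
      (∀ i : Fin n, ∀ g : ((Fin d → ℝ) × (Fin e → ℤ)) → ℂ,
        (∀ a ∈ A i, ∀ x, g (x + a) = g x) →
        (c.sum fun a v => v * g a) = 0) := by
  choose a ha0 using fun i => (A i).ne_bot_iff_exists_ne_zero.mp (hA i)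
  have hW0 : 0 ∈ hWfin.toFinset := hWfin.mem_toFinset.mpr W.zero_mem
  let c : ℂ[(Fin d → ℝ) × (Fin e → ℤ)] := orbitAnnihilator hWfin.toFinset fun i => (a i : _)
  have hsum (g : (Fin d → ℝ) × (Fin e → ℤ) → ℂ) :
      (c.coeff.sum fun a v => v * g a) = linearCombination ℂ g c.coeff := by
    simp [linearCombination_apply]
  refine ⟨c.coeff, ?_, fun w hw g => ?_, fun i g hg => ?_⟩
  · exact fun h => orbitAnnihilator_ne_zero _ (fun i => by simpa using ha0 i) (coeff_injective h)
  · rw [hsum, hsum, ← Function.comp_def, linearCombination_comp_coeff,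
      mapDomain_orbitAnnihilator hWfin hw]
  · rw [hsum]
    refine linearCombination_coeff_eq_zero_of_dvd (fun y => ?_)
      (one_sub_single_dvd_orbitAnnihilator hW0 _ i)
    rw [add_comm]
    exact hg _ (a i).2 y

/-- Let `A = ℝ^d × ℤ^e`, let `W` be a finite group of (additive)
automorphisms of `A`, and let `A₁, …, Aₙ` be nontrivial subgroups of `A`. Then there is a
nonzero distribution on `A` which is a finite linear combination of point masses
(encoded as a finitely supported function `c : A →₀ ℂ`, acting on a test function `g`
by `∑ a, c a * g a`), is `W`-invariant, and vanishes on every function invariant under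
translation by some `Aᵢ`. -/
theorem stmt0 (d e n : ℕ) (hn : 0 < n)
    (W : AddSubgroup (AddAut ((Fin d → ℝ) × (Fin e → ℤ))))
    (hWfin : (W : Set (AddAut ((Fin d → ℝ) × (Fin e → ℤ)))).Finite)
    (A : Fin n → AddSubgroup ((Fin d → ℝ) × (Fin e → ℤ)))
    (hA : ∀ i, A i ≠ ⊥) :
    ∃ c : ((Fin d → ℝ) × (Fin e → ℤ)) →₀ ℂ,
      c ≠ 0 ∧
      (∀ w ∈ W, ∀ g : ((Fin d → ℝ) × (Fin e → ℤ)) → ℂ,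
        (c.sum fun a v => v * g (w a)) = c.sum fun a v => v * g a) ∧
      (∀ i : Fin n, ∀ g : ((Fin d → ℝ) × (Fin e → ℤ)) → ℂ,
        (∀ a ∈ A i, ∀ x, g (x + a) = g x) →
        (c.sum fun a v => v * g a) = 0) :=
  stmt0_general d e n W hWfin A hA
end

section
/- Let μ_T be the uniform probability measure on the subset B(T) = {(x,y) ∈ ℝ^d × (ℝ/ℤ)^e : ‖x‖ ≤ T} of A = ℝ^d × (ℝ/ℤ)^e, let χ : A → 𝕋^n be a continuous homomorphism to the n-torus, and let ν_T be the pushforward of μ_T under χ. Then as T → ∞ the measures ν_T converge weakly to the Haar probability measure of the closure of the image χ(A) in 𝕋^n. -/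
/-!
Write `ρ_T` for the image under `χ` of the uniform measure on the tube `B(T)`. The tubes form a
Følner family: `B(T)` and its translate by `a` both lie in `B(T + ‖a.1‖)`, whose volume exceeds
that of `B(T)` by the factor `(1 + ‖a.1‖ / T) ^ d → 1`. Hence `ρ_T` becomes invariant under
translation by every `χ a`, and, since the translation defects of `ρ_T` are equicontinuous, by
every point of the closure `S` of the image. Averaging the translation defect over `ν`, Fubini and
the `S`-invariance of `ν` give exactly `∫ g dν - ∫ g dρ_T`, which therefore tends to zero by
dominated convergence.
-/

open MeasureTheory Filter Topology ProbabilityTheory Metric Set Module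
open scoped ENNReal

section Averages

variable {α : Type*} [MeasurableSpace α] {μ : Measure α} {f : α → ℝ} {M : ℝ}

theorem integral_cond_eq_inv_mul_setIntegral (s : Set α) :
    ∫ x, f x ∂μ[|s] = (μ.real s)⁻¹ * ∫ x in s, f x ∂μ := by
  rw [ProbabilityTheory.cond, integral_smul_measure, ENNReal.toReal_inv, smul_eq_mul,
    measureReal_def]

theorem norm_integral_cond_sub_integral_cond_le {s w : Set α} (hs : MeasurableSet s)
    (hsw : s ⊆ w) (hs₀ : μ s ≠ 0) (hw : μ w ≠ ∞) (hf : AEStronglyMeasurable f μ)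
    (hM : ∀ x, ‖f x‖ ≤ M) :
    ‖∫ x, f x ∂μ[|s] - ∫ x, f x ∂μ[|w]‖ ≤ 2 * M * (1 - μ.real s / μ.real w) := by
  have hs_fin : μ s ≠ ∞ := ne_top_of_le_ne_top hw (measure_mono hsw)
  have ha : 0 < μ.real s := ENNReal.toReal_pos hs₀ hs_fin
  have hab : μ.real s ≤ μ.real w := measureReal_mono hsw hw
  have hw_split : ∫ x in w, f x ∂μ = (∫ x in s, f x ∂μ) + ∫ x in w \ s, f x ∂μ := by
    rw [← integral_inter_add_sdiff hs (Measure.integrableOn_of_bounded hw hf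
      (Eventually.of_forall hM)), inter_eq_right.mpr hsw]
  have hI : ‖∫ x in s, f x ∂μ‖ ≤ M * μ.real s :=
    norm_setIntegral_le_of_norm_le_const hs_fin.lt_top fun x _ => hM x
  have hJ : ‖∫ x in w \ s, f x ∂μ‖ ≤ M * (μ.real w - μ.real s) := by
    rw [← measureReal_sdiff hsw hs hw]
    exact norm_setIntegral_le_of_norm_le_const
      ((measure_mono sdiff_subset).trans_lt hw.lt_top) fun x _ => hM x
  rw [integral_cond_eq_inv_mul_setIntegral, integral_cond_eq_inv_mul_setIntegral, hw_split]
  set a := μ.real s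
  set b := μ.real w
  set I := ∫ x in s, f x ∂μ
  set J := ∫ x in w \ s, f x ∂μ
  have hb : 0 < b := ha.trans_le hab
  have hinv : b⁻¹ ≤ a⁻¹ := inv_anti₀ ha hab
  calc ‖a⁻¹ * I - b⁻¹ * (I + J)‖ = ‖(a⁻¹ - b⁻¹) * I - b⁻¹ * J‖ := by ring_nf
    _ ≤ (a⁻¹ - b⁻¹) * (M * a) + b⁻¹ * (M * (b - a)) := by
      refine (norm_sub_le _ _).trans (add_le_add ?_ ?_) <;>
        rw [norm_mul, Real.norm_of_nonneg (by linarith [inv_pos.mpr hb])] <;> gcongr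
    _ = 2 * M * (1 - a / b) := by field_simp; ring

end Averages

section Translation

variable {G : Type*} [AddGroup G] [MeasurableSpace G] [MeasurableAdd G] {μ : Measure G}
  [μ.IsAddRightInvariant]

theorem measure_image_add_right (a : G) (s : Set G) : μ ((· + a) '' s) = μ s := by
  rw [image_add_right, measure_preimage_add_right]

theorem map_add_right_cond (a : G) (s : Set G) :
    (μ[|s]).map (· + a) = μ[|(· + a) '' s] := by
  have hrestrict : (μ.restrict s).map (· + a) = μ.restrict ((· + a) '' s) := by
    conv_lhs => rw [← (measurableEmbedding_addRight a).injective.preimage_image s]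
    rw [← (measurableEmbedding_addRight a).restrict_map, map_add_right_eq_self]
  rw [ProbabilityTheory.cond, ProbabilityTheory.cond, Measure.map_smul, hrestrict,
    measure_image_add_right]

theorem norm_integral_comp_add_right_cond_sub_le {f : G → ℝ} {M : ℝ} (a : G) {s w : Set G}
    (hs : MeasurableSet s) (hsw : s ⊆ w) (hsaw : (· + a) '' s ⊆ w) (hs₀ : μ s ≠ 0)
    (hw : μ w ≠ ∞) (hf : AEStronglyMeasurable f μ) (hM : ∀ x, ‖f x‖ ≤ M) :
    ‖∫ x, f (x + a) ∂μ[|s] - ∫ x, f x ∂μ[|s]‖ ≤ 4 * M * (1 - μ.real s / μ.real w) := by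
  set s' := (· + a) '' s
  have hs' : μ s' = μ s := measure_image_add_right a s
  have h₁ := norm_integral_cond_sub_integral_cond_le
    ((measurableEmbedding_addRight a).measurableSet_image.mpr hs) hsaw (hs' ▸ hs₀) hw hf hM
  have h₂ := norm_integral_cond_sub_integral_cond_le hs hsw hs₀ hw hf hM
  rw [measureReal_def, hs', ← measureReal_def] at h₁
  rw [← (measurableEmbedding_addRight a).integral_map, map_add_right_cond]
  calc ‖∫ x, f x ∂μ[|s'] - ∫ x, f x ∂μ[|s]‖
      = ‖(∫ x, f x ∂μ[|s'] - ∫ x, f x ∂μ[|w]) - (∫ x, f x ∂μ[|s] - ∫ x, f x ∂μ[|w])‖ := by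
        congr 1; abel
    _ ≤ _ := (norm_sub_le _ _).trans (add_le_add h₁ h₂)
    _ = _ := by ring

end Translation

instance Prod.instMeasurableAdd {α β : Type*} [Add α] [Add β] [MeasurableSpace α]
    [MeasurableSpace β] [MeasurableAdd α] [MeasurableAdd β] : MeasurableAdd (α × β) where
  measurable_const_add c := (measurable_const_add c.1).prodMap (measurable_const_add c.2)
  measurable_add_const c := (measurable_add_const c.1).prodMap (measurable_add_const c.2)

section Tube

def tube (E K : Type*) [Norm E] (T : ℝ) : Set (E × K) := {x | ‖x.1‖ ≤ T}

variable {E K : Type*} [NormedAddCommGroup E]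

theorem tube_eq_prod (T : ℝ) : tube E K T = closedBall 0 T ×ˢ univ := by
  ext x; simp [tube]

theorem image_add_right_tube_subset [Add K] (a : E × K) (T : ℝ) :
    (· + a) '' tube E K T ⊆ tube E K (T + ‖a.1‖) := by
  rintro _ ⟨x, hx, rfl⟩
  exact (norm_add_le _ _).trans (add_le_add_left hx _)

variable [MeasurableSpace E] [MeasurableSpace K] {μ : Measure E} {ν : Measure K}

theorem measurableSet_tube [OpensMeasurableSpace E] (T : ℝ) : MeasurableSet (tube E K T) := by
  rw [tube_eq_prod]; exact measurableSet_closedBall.prod MeasurableSet.univ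

theorem measure_tube_ne_top [ProperSpace E] [IsFiniteMeasureOnCompacts μ] [IsFiniteMeasure ν]
    (T : ℝ) : μ.prod ν (tube E K T) ≠ ∞ := by
  rw [tube_eq_prod, Measure.prod_prod]
  exact ENNReal.mul_ne_top measure_closedBall_lt_top.ne (measure_ne_top ν univ)

theorem measure_tube_ne_zero [μ.IsOpenPosMeasure] [IsFiniteMeasure ν] [NeZero ν] {T : ℝ}
    (hT : 0 < T) : μ.prod ν (tube E K T) ≠ 0 := by
  rw [tube_eq_prod, Measure.prod_prod]
  exact mul_ne_zero (measure_closedBall_pos μ 0 hT).ne' (NeZero.ne (ν univ))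

theorem isProbabilityMeasure_cond_tube [ProperSpace E] [IsFiniteMeasureOnCompacts μ]
    [μ.IsOpenPosMeasure] [IsFiniteMeasure ν] [NeZero ν] {T : ℝ} (hT : 0 < T) :
    IsProbabilityMeasure ((μ.prod ν)[|tube E K T]) :=
  cond_isProbabilityMeasure_of_finite (measure_tube_ne_zero hT) (measure_tube_ne_top T)

variable [NormedSpace ℝ E] [FiniteDimensional ℝ E] [BorelSpace E] [μ.IsAddHaarMeasure]
  [IsFiniteMeasure ν]

theorem measureReal_tube {T : ℝ} (hT : 0 ≤ T) :
    (μ.prod ν).real (tube E K T) = T ^ finrank ℝ E * (μ.real (ball 0 1) * ν.real univ) := by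
  rw [tube_eq_prod, measureReal_prod_prod, Measure.addHaar_real_closedBall μ 0 hT, mul_assoc]

theorem tendsto_integral_comp_add_right_cond_tube_sub [AddGroup K] [MeasurableAdd K]
    [NeZero ν] [ν.IsAddRightInvariant] {f : E × K → ℝ} {M : ℝ}
    (hf : AEStronglyMeasurable f (μ.prod ν)) (hM : ∀ x, ‖f x‖ ≤ M) (a : E × K) :
    Tendsto (fun T => ∫ x, f (x + a) ∂(μ.prod ν)[|tube E K T] - ∫ x, f x ∂(μ.prod ν)[|tube E K T])
      atTop (𝓝 0) := by
  set r := ‖a.1‖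
  set k := finrank ℝ E
  have hc : 0 < μ.real (ball 0 1) * ν.real univ :=
    mul_pos (ENNReal.toReal_pos (measure_ball_pos μ 0 one_pos).ne' measure_ball_lt_top.ne)
      measureReal_univ_pos
  have hbound : ∀ᶠ T in atTop, ‖∫ x, f (x + a) ∂(μ.prod ν)[|tube E K T]
      - ∫ x, f x ∂(μ.prod ν)[|tube E K T]‖ ≤ 4 * M * (1 - (1 - r / (T + r)) ^ k) := by
    filter_upwards [eventually_gt_atTop 0] with T hT
    have hTr : 0 < T + r := by positivity
    have hratio : (μ.prod ν).real (tube E K T) / (μ.prod ν).real (tube E K (T + r))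
        = (1 - r / (T + r)) ^ k := by
      rw [measureReal_tube hT.le, measureReal_tube hTr.le, mul_div_mul_right _ _ hc.ne',
        ← div_pow]
      congr 1; field_simp; ring
    rw [← hratio]
    exact norm_integral_comp_add_right_cond_sub_le a (measurableSet_tube T)
      (fun x (hx : ‖x.1‖ ≤ T) => show ‖x.1‖ ≤ T + r by linarith [norm_nonneg a.1])
      (image_add_right_tube_subset a T) (measure_tube_ne_zero hT) (measure_tube_ne_top _) hf hM
  have hlim : Tendsto (fun T => 4 * M * (1 - (1 - r / (T + r)) ^ k)) atTop (𝓝 0) := by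
    have h : Tendsto (fun T => r / (T + r)) atTop (𝓝 0) :=
      tendsto_const_nhds.div_atTop (tendsto_atTop_add_const_right _ r tendsto_id)
    have h' : Tendsto (fun T => (1 - r / (T + r)) ^ k) atTop (𝓝 1) := by
      simpa using ((tendsto_const_nhds (x := (1 : ℝ))).sub h).pow k
    simpa using (h'.const_sub 1).const_mul (4 * M)
  exact squeeze_zero_norm' hbound hlim

end Tube

section AsymptoticInvariance

variable {H ι : Type*}

noncomputable def translationDefect [Add H] [MeasurableSpace H] (ρ : Measure H) (g : H → ℝ)
    (h : H) : ℝ :=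
  ∫ y, g (y + h) ∂ρ - ∫ y, g y ∂ρ

def IsAsymptoticallyInvariant [Add H] [MeasurableSpace H] [TopologicalSpace H]
    (ρ : ι → Measure H) (l : Filter ι) (h : H) : Prop :=
  ∀ g : C(H, ℝ), Tendsto (fun i => translationDefect (ρ i) g h) l (𝓝 0)

theorem translationDefect_map [AddZeroClass H] [TopologicalSpace H] [ContinuousAdd H]
    [MeasurableSpace H] [OpensMeasurableSpace H] {G : Type*} [AddZeroClass G] [MeasurableSpace G]
    (μ : Measure G) (χ : G →+ H) (hχ : Measurable χ) (g : C(H, ℝ)) (a : G) :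
    translationDefect (μ.map χ) g (χ a) = ∫ x, g (χ (x + a)) ∂μ - ∫ x, g (χ x) ∂μ := by
  rw [translationDefect, integral_map hχ.aemeasurable (f := fun y => g (y + χ a))
      (g.continuous.comp (continuous_add_const _)).aestronglyMeasurable,
    integral_map hχ.aemeasurable g.continuous.aestronglyMeasurable]
  simp only [map_add]

variable [NormedAddCommGroup H] [CompactSpace H] [MeasurableSpace H] {ρ : Measure H}

theorem norm_translationDefect_le [IsZeroOrProbabilityMeasure ρ] (g : C(H, ℝ)) (h : H) :
    ‖translationDefect ρ g h‖ ≤ 2 * ‖g‖ := by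
  have hbound : ∀ f : H → ℝ, (∀ y, ‖f y‖ ≤ ‖g‖) → ‖∫ y, f y ∂ρ‖ ≤ ‖g‖ := fun f hf =>
    (norm_integral_le_of_norm_le_const (ae_of_all _ hf)).trans
      (mul_le_of_le_one_right (norm_nonneg g) measureReal_le_one)
  refine (norm_sub_le _ _).trans ?_
  linarith [hbound _ fun y => g.norm_coe_le_norm (y + h), hbound _ g.norm_coe_le_norm]

variable [BorelSpace H]

theorem integrable_comp_add_right [IsFiniteMeasure ρ] (g : C(H, ℝ)) (h : H) :
    Integrable (fun y => g (y + h)) ρ :=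
  (BoundedContinuousFunction.mkOfCompact (g.comp (ContinuousMap.addRight h))).integrable ρ

theorem uniformEquicontinuous_translationDefect {ρ : ι → Measure H}
    [∀ i, IsZeroOrProbabilityMeasure (ρ i)] (g : C(H, ℝ)) :
    UniformEquicontinuous fun i => translationDefect (ρ i) g := by
  rw [Metric.uniformEquicontinuous_iff]
  intro ε hε
  obtain ⟨δ, hδ, hg⟩ := Metric.uniformContinuous_iff.mp
    (CompactSpace.uniformContinuous_of_continuous g.continuous) (ε / 2) (half_pos hε)
  refine ⟨δ, hδ, fun h h' hh' i => ?_⟩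
  have hclose : ∀ y, ‖g (y + h) - g (y + h')‖ ≤ ε / 2 := fun y =>
    (hg (by rwa [dist_add_left])).le
  calc dist (translationDefect (ρ i) g h) (translationDefect (ρ i) g h')
      = ‖∫ y, (g (y + h) - g (y + h')) ∂ρ i‖ := by
        rw [dist_eq_norm, translationDefect, translationDefect,
          integral_sub (integrable_comp_add_right g h) (integrable_comp_add_right g h')]
        congr 1; ring
    _ ≤ ε / 2 * (ρ i).real univ := norm_integral_le_of_norm_le_const (ae_of_all _ hclose)
    _ ≤ ε / 2 := mul_le_of_le_one_right (half_pos hε).le measureReal_le_one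
    _ < ε := half_lt_self hε

theorem isClosed_setOf_isAsymptoticallyInvariant {ρ : ι → Measure H} {l : Filter ι}
    [∀ i, IsZeroOrProbabilityMeasure (ρ i)] : IsClosed {h | IsAsymptoticallyInvariant ρ l h} := by
  simp only [IsAsymptoticallyInvariant, ofPred_forall]
  exact isClosed_iInter fun g =>
    (uniformEquicontinuous_translationDefect g).equicontinuous.isClosed_setOfPred_tendsto
      continuous_const

theorem integral_translationDefect [IsProbabilityMeasure ρ] {ν : Measure H}
    [IsProbabilityMeasure ν] (hρν : ∀ᵐ y ∂ρ, ν.map (· + y) = ν) (g : C(H, ℝ)) :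
    ∫ h, translationDefect ρ g h ∂ν = ∫ y, g y ∂ν - ∫ y, g y ∂ρ := by
  have hprod : Integrable (Function.uncurry fun h y => g (y + h)) (ν.prod ρ) :=
    .of_bound (g.continuous.comp (continuous_snd.add continuous_fst)).aestronglyMeasurable ‖g‖
      (ae_of_all _ fun p => g.norm_coe_le_norm _)
  have hinv : ∀ᵐ y ∂ρ, ∫ h, g (y + h) ∂ν = ∫ h, g h ∂ν := hρν.mono fun y hy => by
    conv_rhs => rw [← hy]
    rw [integral_map (measurable_add_const y).aemeasurable g.continuous.aestronglyMeasurable]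
    simp_rw [add_comm]
  have hleft : Integrable (fun h => ∫ y, g (y + h) ∂ρ) ν := hprod.integral_prod_left
  simp only [translationDefect]
  rw [integral_sub hleft (integrable_const _), integral_integral_swap hprod,
    integral_congr_ae hinv]
  simp

theorem tendsto_integral_of_ae_isAsymptoticallyInvariant {ρ : ι → Measure H} {l : Filter ι}
    [l.IsCountablyGenerated] [∀ i, IsZeroOrProbabilityMeasure (ρ i)] {ν : Measure H}
    [IsProbabilityMeasure ν] (hρ : ∀ᶠ i in l, IsProbabilityMeasure (ρ i))
    (hρν : ∀ i, ∀ᵐ y ∂ρ i, ν.map (· + y) = ν) (hν : ∀ᵐ h ∂ν, IsAsymptoticallyInvariant ρ l h)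
    (g : C(H, ℝ)) : Tendsto (fun i => ∫ y, g y ∂ρ i) l (𝓝 (∫ y, g y ∂ν)) := by
  have hdefect : Tendsto (fun i => ∫ h, translationDefect (ρ i) g h ∂ν) l (𝓝 0) := by
    have hcont := (uniformEquicontinuous_translationDefect (ρ := ρ) g).equicontinuous.continuous
    simpa using tendsto_integral_filter_of_dominated_convergence (fun _ => 2 * ‖g‖)
      (Eventually.of_forall fun i => (hcont i).aestronglyMeasurable)
      (Eventually.of_forall fun i => ae_of_all _ (norm_translationDefect_le g))
      (integrable_const _) (hν.mono fun h hh => hh g)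
  have heq : ∀ᶠ i in l, ∫ y, g y ∂ν - ∫ h, translationDefect (ρ i) g h ∂ν = ∫ y, g y ∂ρ i := by
    filter_upwards [hρ] with i hi
    rw [integral_translationDefect (hρν i)]
    ring
  simpa using (tendsto_const_nhds.sub hdefect).congr' heq

end AsymptoticInvariance

theorem isAsymptoticallyInvariant_map_cond_tube {E K H : Type*} [NormedAddCommGroup E]
    [NormedSpace ℝ E] [FiniteDimensional ℝ E] [MeasurableSpace E] [BorelSpace E]
    [AddGroup K] [MeasurableSpace K] [MeasurableAdd K] [NormedAddCommGroup H] [CompactSpace H]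
    [MeasurableSpace H] [BorelSpace H] {μ : Measure E} [μ.IsAddHaarMeasure] {ν : Measure K}
    [IsFiniteMeasure ν] [NeZero ν] [ν.IsAddRightInvariant] (χ : E × K →+ H) (hχ : Measurable χ)
    (a : E × K) :
    IsAsymptoticallyInvariant (fun T => ((μ.prod ν)[|tube E K T]).map χ) atTop (χ a) := fun g => by
  simpa only [translationDefect_map _ χ hχ] using
    tendsto_integral_comp_add_right_cond_tube_sub (f := fun x => g (χ x))
      (g.continuous.measurable.comp hχ).aestronglyMeasurable (fun x => g.norm_coe_le_norm (χ x)) a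

/-- Let `μ_T` be the uniform probability measure on
`B(T) = {(x,y) ∈ ℝ^d × (ℝ/ℤ)^e : ‖x‖ ≤ T}`, let `χ : A → 𝕋^n` be a continuous
homomorphism to the `n`-torus, and let `ν_T = χ_* μ_T`. Then as `T → ∞` the measures
`ν_T` converge weakly to the Haar probability measure `ν` of the closure of the image
`χ(A)` (characterized as a probability measure concentrated on the closure of the image
and invariant under translation by its elements). -/
theorem stmt6 (d e n : ℕ)
    (χ : (EuclideanSpace ℝ (Fin d) × (Fin e → AddCircle (1 : ℝ))) →+
      (Fin n → AddCircle (1 : ℝ)))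
    (hχ : Continuous χ)
    (ν : Measure (Fin n → AddCircle (1 : ℝ))) [IsProbabilityMeasure ν]
    (hfull : ν (closure (Set.range ⇑χ)) = 1)
    (hinv : ∀ h ∈ closure (Set.range ⇑χ), ν.map (· + h) = ν) :
    ∀ g : C(Fin n → AddCircle (1 : ℝ), ℝ),
      Tendsto (fun T : ℝ =>
          ∫ y, g y ∂(Measure.map (⇑χ)
            ((volume {x : EuclideanSpace ℝ (Fin d) × (Fin e → AddCircle (1 : ℝ)) |
                ‖x.1‖ ≤ T})⁻¹ •
              volume.restrict {x : EuclideanSpace ℝ (Fin d) × (Fin e → AddCircle (1 : ℝ)) |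
                ‖x.1‖ ≤ T})))
        atTop (𝓝 (∫ y, g y ∂ν)) := by
  intro g
  set ρ := fun T => ((volume.prod volume)[|tube (EuclideanSpace ℝ (Fin d))
    (Fin e → AddCircle (1 : ℝ)) T]).map χ
  have hρ_closure : ∀ T, ∀ᵐ y ∂ρ T, y ∈ closure (range χ) := fun T =>
    (ae_map_iff hχ.aemeasurable isClosed_closure.measurableSet).mpr
      (ae_of_all _ fun x => subset_closure (mem_range_self x))
  have hν_closure : ∀ᵐ h ∂ν, h ∈ closure (range χ) :=
    (mem_ae_iff_prob_eq_one isClosed_closure.measurableSet).mpr hfull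
  have hclosure : ∀ h ∈ closure (range χ), IsAsymptoticallyInvariant ρ atTop h :=
    closure_minimal (range_subset_iff.mpr
      (isAsymptoticallyInvariant_map_cond_tube χ hχ.measurable))
      isClosed_setOf_isAsymptoticallyInvariant
  have hρ_prob : ∀ᶠ T in atTop, IsProbabilityMeasure (ρ T) := by
    filter_upwards [eventually_gt_atTop 0] with T hT
    exact @Measure.isProbabilityMeasure_map _ _ _ _ _ (isProbabilityMeasure_cond_tube hT) _
      hχ.aemeasurable
  exact tendsto_integral_of_ae_isAsymptoticallyInvariant hρ_prob
    (fun T => (hρ_closure T).mono hinv) (hν_closure.mono hclosure) g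
end

section
/- The Hecke operator T_p is injective on the space V_{n,R} of functions f(x+iy)=h(y)cos(2πnx), n ≠ 0, with h smooth compactly supported: if T_p f = 0 then f = 0. -/
open Real Complex Finset

lemma stmt11_geom_aux (p : ℕ) (z : ℂ) (h1 : z ≠ 1) (hzp : z ^ p = 1) :
    ∑ k ∈ Finset.range p, z ^ k = 0 := by
  rw [geom_sum_eq h1, hzp, sub_self, zero_div]

/-- The Hecke operator `T_p` is injective on the space of functions
`f(x+iy) = h(y)cos(2πnx)`, `n ≠ 0`, with `h` smooth, compactly supported in `(0,∞)`:
if `T_p f = 0` then `f = 0`. -/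
theorem stmt11 (p : ℕ) (hp : p.Prime) (n : ℤ) (hn : n ≠ 0)
    (h : ℝ → ℂ) (hsm : ContDiff ℝ (⊤ : ℕ∞) h) (hcs : HasCompactSupport h)
    (hsupp : ∀ y : ℝ, y ∉ Set.Ioi (0 : ℝ) → h y = 0)
    (f : ℝ → ℝ → ℂ)
    (hf : ∀ x y : ℝ, f x y = h y * (Real.cos (2 * Real.pi * (n : ℝ) * x) : ℂ))
    (hT : ∀ x y : ℝ, 0 < y →
      (Real.sqrt p : ℂ)⁻¹ *
        (f (p * x) (p * y) + ∑ k ∈ Finset.range p, f ((x + k) / p) (y / p)) = 0) :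
    ∀ x y : ℝ, f x y = 0 := by
  have hp0 : (0:ℝ) < p := by exact_mod_cast hp.pos
  have hpn0 : (p:ℝ) ≠ 0 := ne_of_gt hp0
  have hsq : ((Real.sqrt p : ℝ) : ℂ)⁻¹ ≠ 0 := by
    simp only [ne_eq, inv_eq_zero, Complex.ofReal_eq_zero]
    exact ne_of_gt (Real.sqrt_pos.mpr hp0)
  have hnR : ((n:ℝ)) ≠ 0 := Int.cast_ne_zero.mpr hn
  have hpC : ((p:ℕ):ℂ) ≠ 0 := Nat.cast_ne_zero.mpr hp.ne_zero
  have key : ∀ t : ℝ, 0 < t → h t = 0 := by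
    intro t ht
    by_cases hdvd : (p:ℤ) ∣ n
    · -- case p ∣ n
      obtain ⟨m, hm⟩ := hdvd
      have hm0 : m ≠ 0 := by
        rintro rfl; simp at hm; exact hn hm
      have hmR : ((m:ℝ)) ≠ 0 := Int.cast_ne_zero.mpr hm0
      subst hm
      set x₀ : ℝ := 1 / (4 * ((p:ℝ) * (m:ℝ)) * p) with hx₀
      have hx := hT x₀ (p * t) (by positivity)
      simp only [hf] at hx
      have e1 : 2 * Real.pi * (((p:ℤ) * m : ℤ) : ℝ) * ((p:ℝ) * x₀) = Real.pi / 2 := by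
        rw [hx₀]; push_cast; field_simp; ring
      have e2 : ∀ k : ℕ, Real.cos (2 * Real.pi * (((p:ℤ) * m : ℤ) : ℝ) * ((x₀ + (k:ℝ)) / p))
          = Real.cos (Real.pi / (2 * (p:ℝ)^2)) := by
        intro k
        have harg : 2 * Real.pi * (((p:ℤ) * m : ℤ) : ℝ) * ((x₀ + (k:ℝ)) / p)
            = Real.pi / (2 * (p:ℝ)^2) + ((m * k : ℤ) : ℝ) * (2 * Real.pi) := by
          rw [hx₀]; push_cast; field_simp; ring
        rw [harg, Real.cos_add_int_mul_two_pi]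
      have hcpos : 0 < Real.cos (Real.pi / (2 * (p:ℝ)^2)) := by
        apply Real.cos_pos_of_mem_Ioo
        constructor
        · have : (0:ℝ) < Real.pi / (2 * (p:ℝ)^2) := by positivity
          linarith [Real.pi_pos]
        · have h2 : (2:ℝ) ≤ (p:ℝ) := by exact_mod_cast hp.two_le
          have h4 : (1:ℝ) < (p:ℝ)^2 := by nlinarith
          rw [div_lt_div_iff₀ (by positivity) (by norm_num)]
          nlinarith [Real.pi_pos]
      have hcne : ((Real.cos (Real.pi / (2 * (p:ℝ)^2)) : ℝ) : ℂ) ≠ 0 := by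
        exact_mod_cast ne_of_gt hcpos
      rw [e1] at hx
      simp only [e2] at hx
      rw [Real.cos_pi_div_two] at hx
      have hpt : (p:ℝ) * t / p = t := by field_simp
      rw [hpt] at hx
      simp only [Complex.ofReal_zero, mul_zero, zero_add, Finset.sum_const,
        Finset.card_range, nsmul_eq_mul] at hx
      -- hx : (√p)⁻¹ * (p * (h t * cos)) = 0
      rcases mul_eq_zero.mp hx with h1 | h2
      · exact absurd h1 hsq
      · rcases mul_eq_zero.mp h2 with h3 | h4
        · exact absurd h3 (by exact_mod_cast hp.ne_zero)
        · rcases mul_eq_zero.mp h4 with h5 | h6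
          · exact h5
          · exact absurd h6 hcne
    · -- case p ∤ n
      set ω : ℂ := Complex.exp (((2 * Real.pi * (n:ℝ) / p : ℝ) : ℂ) * Complex.I) with hω
      have hω1 : ω ≠ 1 := by
        intro hEq
        rw [hω, Complex.exp_eq_one_iff] at hEq
        obtain ⟨m, hm⟩ := hEq
        apply hdvd
        have h2πI : (2 * (Real.pi:ℂ) * Complex.I) ≠ 0 := by
          simp [Real.pi_ne_zero, Complex.I_ne_zero]
        have h1 : ((n:ℂ) / p) * (2 * (Real.pi:ℂ) * Complex.I)
            = (m:ℂ) * (2 * (Real.pi:ℂ) * Complex.I) := by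
          rw [← hm]; push_cast; ring
        have h2 : ((n:ℂ) / p) = (m:ℂ) := mul_right_cancel₀ h2πI h1
        have hpC : ((p:ℂ)) ≠ 0 := by exact_mod_cast hpn0
        have h3 : (n:ℂ) = (m:ℂ) * p := by
          field_simp at h2; linear_combination h2
        have h4 : n = m * p := by exact_mod_cast h3
        exact ⟨m, by linarith [h4]⟩
      have hωp : ω ^ p = 1 := by
        rw [hω, ← Complex.exp_nat_mul]
        have : (p:ℂ) * (((2 * Real.pi * (n:ℝ) / p : ℝ) : ℂ) * Complex.I)
            = (n:ℤ) * (2 * (Real.pi:ℂ) * Complex.I) := by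
          push_cast; field_simp
        rw [this, Complex.exp_int_mul_two_pi_mul_I]
      have hωinv1 : ω⁻¹ ≠ 1 := fun e => hω1 (inv_eq_one.mp e)
      have hωinvp : ω⁻¹ ^ p = 1 := by rw [inv_pow, hωp, inv_one]
      have hterm : ∀ k : ℕ, ((Real.cos (2 * Real.pi * (n:ℝ) * ((0 + (k:ℝ)) / p)) : ℝ) : ℂ)
          = (ω ^ k + ω⁻¹ ^ k) / 2 := by
        intro k
        rw [Complex.ofReal_cos]
        have hinv : ω⁻¹ = Complex.exp (-(((2 * Real.pi * (n:ℝ) / p : ℝ) : ℂ) * Complex.I)) := by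
          rw [hω, ← Complex.exp_neg]
        rw [Complex.cos, hω, hinv, ← Complex.exp_nat_mul, ← Complex.exp_nat_mul]
        congr 2
        · push_cast; ring
        · push_cast; ring
      have hsum : ∑ k ∈ Finset.range p,
          ((Real.cos (2 * Real.pi * (n:ℝ) * ((0 + (k:ℝ)) / p)) : ℝ) : ℂ) = 0 := by
        simp only [hterm]
        rw [← Finset.sum_div, Finset.sum_add_distrib,
          stmt11_geom_aux p ω hω1 hωp, stmt11_geom_aux p ω⁻¹ hωinv1 hωinvp]
        norm_num
      have hx := hT 0 (t / p) (by positivity)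
      simp only [hf] at hx
      rw [← Finset.mul_sum, hsum] at hx
      have hpt : (p:ℝ) * (t / p) = t := by field_simp
      simp only [mul_zero, add_zero, Real.cos_zero, Complex.ofReal_one, mul_one] at hx
      rw [hpt] at hx
      rcases mul_eq_zero.mp hx with h1 | h2
      · exact absurd h1 hsq
      · exact h2
  intro x y
  rw [hf]
  rcases le_or_gt y 0 with hy | hy
  · rw [hsupp y (by simp [Set.mem_Ioi]; exact hy)]; ring
  · rw [key y hy]; ring
end

section
/- Suppose ψ is a holomorphic function on ℂ^n invariant under the complex orthogonal group O(n,ℂ) acting linearly. Then ψ(ν) depends only on the quadratic form ⟨ν,ν⟩ = ∑νᵢ²: there is a holomorphic function g on ℂ such that ψ(ν) = g(⟨ν,ν⟩) for all ν. -/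
/-!
Reflections `x ↦ x - (2 (u ⬝ᵥ x) / (u ⬝ᵥ u)) • u` in non-isotropic vectors `u`, together with `-1`,
act transitively on each level set `{v ⬝ᵥ v = c}` with `c ≠ 0`, so `ψ` is constant there. Composing
`ψ` with an entire right inverse `σ` of `v ↦ v ⬝ᵥ v` gives `g = ψ ∘ σ`, and `ψ = g (v ⬝ᵥ v)` holds
on the dense set `{v ⬝ᵥ v ≠ 0}`, hence everywhere by continuity.
-/

open Matrix Filter Topology Polynomial

namespace Matrix

variable {ι 𝕜 : Type*} [Fintype ι] [DecidableEq ι] [Field 𝕜]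

def reflection (u : ι → 𝕜) : Matrix ι ι 𝕜 :=
  1 - (2 / (u ⬝ᵥ u)) • vecMulVec u u

theorem reflection_mulVec (u x : ι → 𝕜) :
    reflection u *ᵥ x = x - (2 * (u ⬝ᵥ x) / (u ⬝ᵥ u)) • u := by
  have : vecMulVec u u *ᵥ x = (u ⬝ᵥ x) • u := by
    ext i
    simp only [mulVec, dotProduct, vecMulVec_apply, Pi.smul_apply, smul_eq_mul, Finset.sum_mul]
    exact Finset.sum_congr rfl fun k _ => by ring
  rw [reflection, sub_mulVec, one_mulVec, smul_mulVec, this, smul_smul, div_mul_eq_mul_div]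

theorem transpose_mul_reflection {u : ι → 𝕜} (hu : u ⬝ᵥ u ≠ 0) :
    (reflection u)ᵀ * reflection u = 1 := by
  unfold reflection
  set c : 𝕜 := 2 / (u ⬝ᵥ u)
  have hsymm : (vecMulVec u u)ᵀ = vecMulVec u u := by
    ext i j; simp [vecMulVec_apply, mul_comm]
  have hsq : vecMulVec u u * vecMulVec u u = (u ⬝ᵥ u) • vecMulVec u u := by
    ext i j
    simp only [mul_apply, vecMulVec_apply, smul_apply, smul_eq_mul, dotProduct, Finset.sum_mul]
    exact Finset.sum_congr rfl fun k _ => by ring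
  have hc : c * c * (u ⬝ᵥ u) = c + c := by simp only [c]; field_simp; ring
  simp only [transpose_sub, transpose_smul, transpose_one, hsymm, sub_mul, mul_sub, one_mul,
    mul_one, smul_mul_smul_comm, hsq, smul_smul, hc]
  module

theorem reflection_sub_mulVec {v w : ι → 𝕜} (hQ : v ⬝ᵥ v = w ⬝ᵥ w)
    (hvw : (v - w) ⬝ᵥ (v - w) ≠ 0) : reflection (v - w) *ᵥ v = w := by
  have hnum : (v - w) ⬝ᵥ v = v ⬝ᵥ v - w ⬝ᵥ v := sub_dotProduct v w v
  have hden : (v - w) ⬝ᵥ (v - w) = 2 * (v ⬝ᵥ v - w ⬝ᵥ v) := by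
    rw [sub_dotProduct, dotProduct_sub, dotProduct_sub, dotProduct_comm v w, ← hQ]; ring
  rw [hden] at hvw
  rw [reflection_mulVec, hnum, hden, div_self hvw, one_smul, sub_sub_cancel]

end Matrix

section Invariant

variable {ι 𝕜 β : Type*} [Fintype ι] [DecidableEq ι] [Field 𝕜] {ψ : (ι → 𝕜) → β}

theorem apply_eq_of_dotProduct_self_eq [NeZero (2 : 𝕜)]
    (hinv : ∀ A : Matrix ι ι 𝕜, Aᵀ * A = 1 → ∀ v, ψ (A *ᵥ v) = ψ v)
    {v w : ι → 𝕜} (hQ : v ⬝ᵥ v = w ⬝ᵥ w) (hv : v ⬝ᵥ v ≠ 0) : ψ v = ψ w := by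
  have hswap : ∀ w : ι → 𝕜, v ⬝ᵥ v = w ⬝ᵥ w → (v - w) ⬝ᵥ (v - w) ≠ 0 → ψ v = ψ w :=
    fun w hQ hvw => by rw [← hinv _ (transpose_mul_reflection hvw), reflection_sub_mulVec hQ hvw]
  -- One of `w`, `-w` is reached by a reflection, as `hpar` below shows.
  by_cases hvw : (v - w) ⬝ᵥ (v - w) = 0
  · have hpar : (v - w) ⬝ᵥ (v - w) + (v + w) ⬝ᵥ (v + w) = 2 * 2 * (v ⬝ᵥ v) := by
      simp only [sub_dotProduct, dotProduct_sub, add_dotProduct, dotProduct_add, ← hQ,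
        dotProduct_comm w v]
      ring
    have hvw' : (v - -w) ⬝ᵥ (v - -w) ≠ 0 := by
      rw [sub_neg_eq_add]
      intro h
      rw [hvw, h, add_zero] at hpar
      exact mul_ne_zero (mul_ne_zero two_ne_zero two_ne_zero) hv hpar.symm
    rw [hswap (-w) (by rwa [neg_dotProduct_neg]) hvw', ← hinv (-1) (by simp) w, neg_mulVec,
      one_mulVec]
  · exact hswap w hQ hvw

end Invariant

theorem Polynomial.eventually_nhdsNE_eval_ne_zero {K : Type*} [Field K] [TopologicalSpace K]
    [T1Space K] {p : K[X]} (hp : p ≠ 0) (a : K) : ∀ᶠ t in 𝓝[≠] a, p.eval t ≠ 0 :=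
  nhdsNE_le_cofinite a (finite_setOfPred_isRoot hp).compl_mem_cofinite

theorem Matrix.dotProduct_self_add_smul_single {ι 𝕜 : Type*} [Fintype ι] [DecidableEq ι]
    [CommRing 𝕜] (v : ι → 𝕜) (i : ι) (t : 𝕜) :
    (v + t • Pi.single i 1) ⬝ᵥ (v + t • Pi.single i 1) = t ^ 2 + 2 * v i * t + v ⬝ᵥ v := by
  simp only [add_dotProduct, dotProduct_add, smul_dotProduct, dotProduct_smul,
    single_one_dotProduct, dotProduct_single_one, Pi.add_apply, Pi.smul_apply, Pi.single_eq_same,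
    smul_eq_mul]
  ring

theorem Matrix.dense_setOf_dotProduct_self_ne_zero {ι 𝕜 : Type*} [Fintype ι] [Nonempty ι]
    [NontriviallyNormedField 𝕜] : Dense {v : ι → 𝕜 | v ⬝ᵥ v ≠ 0} := by
  classical
  intro v
  obtain ⟨i⟩ := ‹Nonempty ι›
  set p : 𝕜[X] := X ^ 2 + C (2 * v i) * X + C (v ⬝ᵥ v)
  have hp : p ≠ 0 := fun h => by simpa [p] using congrArg (coeff · 2) h
  have hline : Tendsto (fun t : 𝕜 => v + t • Pi.single i 1) (𝓝[≠] 0) (𝓝 v) := by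
    have : Continuous fun t : 𝕜 => v + t • Pi.single i (1 : 𝕜) := by fun_prop
    simpa using (this.tendsto 0).mono_left nhdsWithin_le_nhds
  refine mem_closure_of_tendsto hline ?_
  filter_upwards [eventually_nhdsNE_eval_ne_zero hp 0] with t ht
  rw [dotProduct_self_add_smul_single]
  simpa [p] using ht

section RightInverse

open Complex

variable {ι : Type*} [Fintype ι] [DecidableEq ι]

/-- For `i ≠ j`, a right inverse of `v ↦ v ⬝ᵥ v`, as `((z + 1) / 2) ^ 2 + (I * (z - 1) / 2) ^ 2 = z`.
-/
noncomputable def dotProductSelfSection (i j : ι) (z : ℂ) : ι → ℂ :=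
  ((z + 1) / 2) • Pi.single i 1 + (I * (z - 1) / 2) • Pi.single j 1

theorem dotProductSelfSection_dotProduct_self {i j : ι} (hij : i ≠ j) (z : ℂ) :
    dotProductSelfSection i j z ⬝ᵥ dotProductSelfSection i j z = z := by
  simp only [dotProductSelfSection, add_dotProduct, dotProduct_add, smul_dotProduct,
    dotProduct_smul, single_one_dotProduct, Pi.single_eq_same, Pi.single_eq_of_ne hij,
    Pi.single_eq_of_ne hij.symm, smul_eq_mul]
  linear_combination (z - 1) ^ 2 / 4 * I_sq

theorem differentiable_dotProductSelfSection (i j : ι) :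
    Differentiable ℂ (dotProductSelfSection i j) := by
  unfold dotProductSelfSection
  fun_prop

end RightInverse

/-- A holomorphic function `ψ` on `ℂ^n` (`n ≥ 2`) invariant under the
complex orthogonal group `O(n,ℂ)` depends only on the quadratic form `⟨ν,ν⟩ = ∑ νᵢ²`:
there is an entire function `g : ℂ → ℂ` with `ψ(ν) = g(∑ νᵢ²)`. -/
theorem stmt13 (n : ℕ) (hn : 2 ≤ n) (ψ : (Fin n → ℂ) → ℂ)
    (hψ : Differentiable ℂ ψ)
    (hinv : ∀ A : Matrix (Fin n) (Fin n) ℂ, A.transpose * A = 1 →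
      ∀ v : Fin n → ℂ, ψ (A.mulVec v) = ψ v) :
    ∃ g : ℂ → ℂ, Differentiable ℂ g ∧ ∀ v : Fin n → ℂ, ψ v = g (∑ i, v i ^ 2) := by
  let i : Fin n := ⟨0, by omega⟩
  let j : Fin n := ⟨1, by omega⟩
  have hij : i ≠ j := by simp [i, j, Fin.ext_iff]
  have : Nonempty (Fin n) := ⟨i⟩
  set σ := dotProductSelfSection i j
  have hσ : Differentiable ℂ σ := differentiable_dotProductSelfSection i j
  have hψσ : ψ = fun v => ψ (σ (v ⬝ᵥ v)) :=
    Continuous.ext_on dense_setOf_dotProduct_self_ne_zero hψ.continuous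
      ((hψ.comp hσ).continuous.comp' (by fun_prop))
      fun v hv => apply_eq_of_dotProduct_self_eq hinv
        (dotProductSelfSection_dotProduct_self hij _).symm hv
  refine ⟨ψ ∘ σ, hψ.comp hσ, fun v => ?_⟩
  rw [congrFun hψσ v]
  simp [dotProduct, sq]
end

section
/- Let (a_ν) be a sequence of nonnegative reals indexed by a countable set ℰ with a weight ‖ν‖ ≥ 0, and suppose h : [0,∞) → [0,1] is measurable with h(s) ≥ 1 − ε for 0 ≤ s ≤ √(1−ε), h(s) ≤ 1 for all s, and h(s) ≤ ε(1+s)^{−(d+1)} for s ≥ 1. Assume #{ν : ‖ν‖ ≤ R} ≤ C R^d for all R ≥ 1, and that ∑_ν h(t‖ν‖) = (α + O(ε)) t^{−d} as t → 0. Then (α − O(ε)) t^{−d} ≤ #{ν : ‖ν‖ < 1/t} ≤ (1−ε)^{−1}(α + O(ε)) (t/√(1−ε))^{−d} for all sufficiently small t, where the implied constants depend only on C, d. -/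
/-!
Split `∑ h (t ‖ν‖)` at `‖ν‖ = 1 / t`. The near part is at most the count `N(t)` because `h ≤ 1`;
the far part is `O(ε t⁻ᵈ)`: summing the decay `h(s) ≤ ε (1 + s)^{-(d+1)}` over dyadic shells, each
of which has `O((2ᵏ / t)ᵈ)` points by the growth bound, gives a geometric series. This is the lower
bound. For the upper bound, `h ≥ 1 - ε` on `[0, √(1 - ε)]` gives
`(1 - ε) N(t) ≤ ∑ h (t √(1 - ε) ‖ν‖)`, which the asymptotics at scale `t √(1 - ε)` control; the
resulting factor `√(1 - ε)⁻ᵈ` is traded for `√(1 - ε)ᵈ` at the cost of `O(ε)`, since `α = O(1)`.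
-/

open Finset

theorem two_pow_log_floor_le {x : ℝ} (hx : 1 ≤ x) : (2 : ℝ) ^ Nat.log 2 ⌊x⌋₊ ≤ x := by
  have := Int.zpow_log_le_self (b := 2) one_lt_two (zero_lt_one.trans_le hx)
  rwa [Int.log_of_one_le_right 2 hx, zpow_natCast, Nat.cast_ofNat] at this

theorem lt_two_pow_log_floor_succ {x : ℝ} (hx : 1 ≤ x) : x < 2 ^ (Nat.log 2 ⌊x⌋₊ + 1) := by
  have := Int.lt_zpow_succ_log_self (b := 2) one_lt_two x
  rwa [Int.log_of_one_le_right 2 hx, ← Nat.cast_succ, zpow_natCast, Nat.cast_ofNat] at this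

section Counting

variable {ι : Type*} {nrm : ι → ℝ} {C ε t : ℝ} {d : ℕ} {h : ℝ → ℝ}

theorem card_le_of_forall_le (hfin : ∀ R : ℝ, 1 ≤ R → {ν : ι | nrm ν ≤ R}.Finite)
    (hcount : ∀ R : ℝ, 1 ≤ R → ({ν : ι | nrm ν ≤ R}.ncard : ℝ) ≤ C * R ^ d)
    {R : ℝ} (hR : 1 ≤ R) {F : Finset ι} (hF : ∀ ν ∈ F, nrm ν ≤ R) : (#F : ℝ) ≤ C * R ^ d := by
  rw [← Set.ncard_coe_finset]
  exact (Nat.cast_le.2 (Set.ncard_le_ncard hF (hfin R hR))).trans (hcount R hR)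

theorem sum_inv_one_add_pow_le (hfin : ∀ R : ℝ, 1 ≤ R → {ν : ι | nrm ν ≤ R}.Finite)
    (hcount : ∀ R : ℝ, 1 ≤ R → ({ν : ι | nrm ν ≤ R}.ncard : ℝ) ≤ C * R ^ d)
    (ht : 0 < t) (ht1 : t ≤ 1) (F : Finset ι) (hF : ∀ ν ∈ F, 1 ≤ t * nrm ν) :
    ∑ ν ∈ F, ((1 + t * nrm ν) ^ (d + 1))⁻¹ ≤ 2 ^ (d + 1) * C / t ^ d := by
  classical
  -- `m ν = k` puts `ν` in the dyadic shell `2 ^ k ≤ t * nrm ν < 2 ^ (k + 1)`, which has at most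
  -- `C (2 ^ (k + 1) / t) ^ d` points, each contributing at most `2 ^ (-k (d + 1))`.
  set m : ι → ℕ := fun ν ↦ Nat.log 2 ⌊t * nrm ν⌋₊
  have hfiber (k : ℕ) : ∑ ν ∈ F with m ν = k, ((1 + t * nrm ν) ^ (d + 1))⁻¹ ≤
      2 ^ d * C / t ^ d * (1 / 2) ^ k := by
    have hterm : ∀ ν ∈ F.filter (m · = k),
        ((1 + t * nrm ν) ^ (d + 1))⁻¹ ≤ (((2 : ℝ) ^ k) ^ (d + 1))⁻¹ := by
      intro ν hν
      obtain ⟨hνF, rfl⟩ := mem_filter.1 hν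
      have := two_pow_log_floor_le (hF ν hνF)
      gcongr
      linarith
    have hcard : (#{ν ∈ F | m ν = k} : ℝ) ≤ C * (2 ^ (k + 1) / t) ^ d := by
      refine card_le_of_forall_le hfin hcount ?_ fun ν hν ↦ ?_
      · rw [one_le_div ht]
        exact ht1.trans (one_le_pow₀ one_le_two)
      · obtain ⟨hνF, rfl⟩ := mem_filter.1 hν
        rw [le_div_iff₀ ht, mul_comm]
        exact (lt_two_pow_log_floor_succ (hF ν hνF)).le
    calc ∑ ν ∈ F with m ν = k, ((1 + t * nrm ν) ^ (d + 1))⁻¹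
        ≤ #{ν ∈ F | m ν = k} * (((2 : ℝ) ^ k) ^ (d + 1))⁻¹ := by
          simpa using sum_le_card_nsmul _ _ _ hterm
      _ ≤ C * (2 ^ (k + 1) / t) ^ d * (((2 : ℝ) ^ k) ^ (d + 1))⁻¹ := by gcongr
      _ = 2 ^ d * C / t ^ d * (1 / 2) ^ k := by rw [div_pow, one_div, inv_pow]; field_simp; ring
  calc ∑ ν ∈ F, ((1 + t * nrm ν) ^ (d + 1))⁻¹
      = ∑ k ∈ F.image m, ∑ ν ∈ F with m ν = k, ((1 + t * nrm ν) ^ (d + 1))⁻¹ :=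
        (sum_fiberwise_of_maps_to (fun ν hν ↦ mem_image_of_mem m hν) _).symm
    _ ≤ ∑ k ∈ F.image m, 2 ^ d * C / t ^ d * (1 / 2) ^ k := sum_le_sum fun k _ ↦ hfiber k
    _ = 2 ^ d * C / t ^ d * ∑ k ∈ F.image m, (1 / 2 : ℝ) ^ k := by rw [mul_sum]
    _ ≤ 2 ^ d * C / t ^ d * 2 := by
        have hC : 0 ≤ C := by simpa using (Nat.cast_nonneg _).trans (hcount 1 le_rfl)
        gcongr
        exact (summable_geometric_two.sum_le_tsum _ fun _ _ ↦ by positivity).trans_eq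
          tsum_geometric_two
    _ = 2 ^ (d + 1) * C / t ^ d := by ring

theorem sum_le_ncard_add (hfin : ∀ R : ℝ, 1 ≤ R → {ν : ι | nrm ν ≤ R}.Finite)
    (hcount : ∀ R : ℝ, 1 ≤ R → ({ν : ι | nrm ν ≤ R}.ncard : ℝ) ≤ C * R ^ d)
    (hnrm : ∀ ν, 0 ≤ nrm ν) (hε : 0 ≤ ε)
    (hh : ∀ s : ℝ, 0 ≤ s → h s ≤ 1) (hdecay : ∀ s : ℝ, 1 ≤ s → h s ≤ ε / (1 + s) ^ (d + 1))
    (ht : 0 < t) (ht1 : t ≤ 1) (F : Finset ι) :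
    ∑ ν ∈ F, h (t * nrm ν) ≤ {ν | nrm ν < 1 / t}.ncard + ε * (2 ^ (d + 1) * C / t ^ d) := by
  classical
  have hS : {ν | nrm ν < 1 / t}.Finite :=
    (hfin (1 / t) (one_le_one_div ht ht1)).subset fun ν (hν : nrm ν < 1 / t) ↦ hν.le
  rw [← sum_filter_add_sum_filter_not F (fun ν ↦ nrm ν < 1 / t)]
  gcongr ?_ + ?_
  · calc ∑ ν ∈ F with nrm ν < 1 / t, h (t * nrm ν)
        ≤ ∑ ν ∈ F with nrm ν < 1 / t, 1 :=
          sum_le_sum fun ν _ ↦ hh _ (mul_nonneg ht.le (hnrm ν))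
      _ ≤ {ν | nrm ν < 1 / t}.ncard := by
          rw [sum_const, nsmul_one, ← Set.ncard_coe_finset]
          exact_mod_cast Set.ncard_le_ncard (fun ν hν ↦ (mem_filter.1 hν).2) hS
  · have hfar : ∀ ν ∈ F.filter (¬nrm · < 1 / t), 1 ≤ t * nrm ν := fun ν hν ↦ by
      have := not_lt.1 (mem_filter.1 hν).2
      rwa [div_le_iff₀' ht] at this
    calc ∑ ν ∈ F with ¬nrm ν < 1 / t, h (t * nrm ν)
        ≤ ∑ ν ∈ F with ¬nrm ν < 1 / t, ε * ((1 + t * nrm ν) ^ (d + 1))⁻¹ :=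
          sum_le_sum fun ν hν ↦ (hdecay _ (hfar ν hν)).trans_eq (div_eq_mul_inv _ _)
      _ ≤ ε * (2 ^ (d + 1) * C / t ^ d) := by
          rw [← mul_sum]
          exact mul_le_mul_of_nonneg_left (sum_inv_one_add_pow_le hfin hcount ht ht1 _ hfar) hε

theorem mul_ncard_le_tsum {S : Set ι} (hS : S.Finite) {f : ι → ℝ} (hf : Summable f)
    (hf0 : ∀ ν, 0 ≤ f ν) {c : ℝ} (hc : ∀ ν ∈ S, c ≤ f ν) : c * S.ncard ≤ ∑' ν, f ν := by
  rw [Set.ncard_eq_toFinset_card S hS, mul_comm, ← nsmul_eq_mul]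
  exact (card_nsmul_le_sum _ _ _ fun ν hν ↦ hc ν (hS.mem_toFinset.1 hν)).trans
    (hf.sum_le_tsum _ fun ν _ ↦ hf0 ν)

theorem summable_smoothed (hfin : ∀ R : ℝ, 1 ≤ R → {ν : ι | nrm ν ≤ R}.Finite)
    (hcount : ∀ R : ℝ, 1 ≤ R → ({ν : ι | nrm ν ≤ R}.ncard : ℝ) ≤ C * R ^ d)
    (hnrm : ∀ ν, 0 ≤ nrm ν) (hε : 0 ≤ ε) (hh : ∀ s : ℝ, 0 ≤ s → 0 ≤ h s ∧ h s ≤ 1)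
    (hdecay : ∀ s : ℝ, 1 ≤ s → h s ≤ ε / (1 + s) ^ (d + 1)) (ht : 0 < t) (ht1 : t ≤ 1) :
    Summable fun ν ↦ h (t * nrm ν) :=
  summable_of_sum_le (fun ν ↦ (hh _ (mul_nonneg ht.le (hnrm ν))).1)
    (sum_le_ncard_add hfin hcount hnrm hε (fun s hs ↦ (hh s hs).2) hdecay ht ht1)

theorem pow_mul_tsum_le (hfin : ∀ R : ℝ, 1 ≤ R → {ν : ι | nrm ν ≤ R}.Finite)
    (hcount : ∀ R : ℝ, 1 ≤ R → ({ν : ι | nrm ν ≤ R}.ncard : ℝ) ≤ C * R ^ d)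
    (hnrm : ∀ ν, 0 ≤ nrm ν) (hε : 0 ≤ ε) (hh : ∀ s : ℝ, 0 ≤ s → h s ≤ 1)
    (hdecay : ∀ s : ℝ, 1 ≤ s → h s ≤ ε / (1 + s) ^ (d + 1)) (ht : 0 < t) (ht1 : t ≤ 1) :
    t ^ d * ∑' ν, h (t * nrm ν) ≤
      t ^ d * {ν | nrm ν < 1 / t}.ncard + 2 ^ (d + 1) * C * ε := by
  have hbound := sum_le_ncard_add hfin hcount hnrm hε hh hdecay ht ht1
  calc t ^ d * ∑' ν, h (t * nrm ν)
      ≤ t ^ d * ({ν | nrm ν < 1 / t}.ncard + ε * (2 ^ (d + 1) * C / t ^ d)) := by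
        gcongr
        exact tsum_le_of_sum_le' (by simpa using hbound ∅) hbound
    _ = t ^ d * {ν | nrm ν < 1 / t}.ncard + 2 ^ (d + 1) * C * ε := by
        rw [mul_add]; congr 1; field_simp

theorem pow_mul_ncard_le (hfin : ∀ R : ℝ, 1 ≤ R → {ν : ι | nrm ν ≤ R}.Finite)
    (hcount : ∀ R : ℝ, 1 ≤ R → ({ν : ι | nrm ν ≤ R}.ncard : ℝ) ≤ C * R ^ d)
    (ht : 0 < t) (ht1 : t ≤ 1) : t ^ d * {ν | nrm ν < 1 / t}.ncard ≤ C := by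
  have h1t := one_le_one_div ht ht1
  have hN : ({ν | nrm ν < 1 / t}.ncard : ℝ) ≤ C * (1 / t) ^ d :=
    (Nat.cast_le.2 (Set.ncard_le_ncard (fun ν (hν : nrm ν < 1 / t) ↦ hν.le) (hfin _ h1t))).trans
      (hcount _ h1t)
  calc t ^ d * {ν | nrm ν < 1 / t}.ncard ≤ t ^ d * (C * (1 / t) ^ d) := by gcongr
    _ = C := by rw [one_div, inv_pow]; field_simp

theorem one_sub_mul_ncard_le_tsum (hfin : ∀ R : ℝ, 1 ≤ R → {ν : ι | nrm ν ≤ R}.Finite)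
    (hcount : ∀ R : ℝ, 1 ≤ R → ({ν : ι | nrm ν ≤ R}.ncard : ℝ) ≤ C * R ^ d)
    (hnrm : ∀ ν, 0 ≤ nrm ν) (hε : 0 ≤ ε) (hε1 : ε < 1) (hh : ∀ s : ℝ, 0 ≤ s → 0 ≤ h s ∧ h s ≤ 1)
    (hlow : ∀ s : ℝ, 0 ≤ s → s ≤ √(1 - ε) → 1 - ε ≤ h s)
    (hdecay : ∀ s : ℝ, 1 ≤ s → h s ≤ ε / (1 + s) ^ (d + 1)) (ht : 0 < t) (ht1 : t ≤ 1) :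
    (1 - ε) * {ν | nrm ν < 1 / t}.ncard ≤ ∑' ν, h (t * √(1 - ε) * nrm ν) := by
  have hq : 0 < √(1 - ε) := Real.sqrt_pos.2 (sub_pos.2 hε1)
  have hq1 : √(1 - ε) ≤ 1 := Real.sqrt_le_one.2 (by linarith)
  have hs : 0 < t * √(1 - ε) := mul_pos ht hq
  have hS : {ν | nrm ν < 1 / t}.Finite :=
    (hfin _ (one_le_one_div ht ht1)).subset fun ν (hν : nrm ν < 1 / t) ↦ hν.le
  refine mul_ncard_le_tsum hS
    (summable_smoothed hfin hcount hnrm hε hh hdecay hs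
      ((mul_le_of_le_one_right ht.le hq1).trans ht1))
    (fun ν ↦ (hh _ (mul_nonneg hs.le (hnrm ν))).1) fun ν (hν : nrm ν < 1 / t) ↦ ?_
  refine hlow _ (mul_nonneg hs.le (hnrm ν)) ?_
  have : t * nrm ν ≤ 1 := by rw [lt_div_iff₀' ht] at hν; exact hν.le
  calc t * √(1 - ε) * nrm ν = √(1 - ε) * (t * nrm ν) := by ring
    _ ≤ √(1 - ε) := mul_le_of_le_one_right hq.le this

end Counting

section Constant

-- `(1 - ε) ^ d ≥ 2 ^ (-d)` absorbs the factor `2 ^ d`, and `α ≤ B + 2 ^ (d + 1) C` bounds the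
-- Bernoulli loss `α d ε` in `(1 - ε) ^ d ≥ 1 - d ε`.
def countingConst (d : ℕ) (C : ℝ) : ℝ := 2 ^ d * (d + 1) * (2 ^ (d + 1) * C + 1)

variable {C B : ℝ} {d : ℕ}

theorem countingConst_pos (hC : 0 ≤ C) : 0 < countingConst d C := by
  unfold countingConst; positivity

theorem add_le_countingConst_mul (hC : 0 ≤ C) (hB : 0 ≤ B) :
    B + 2 ^ (d + 1) * C ≤ countingConst d C * (B + 1) := by
  have hD : 2 ^ (d + 1) * C + 1 ≤ countingConst d C :=
    le_mul_of_one_le_left (by positivity)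
      (one_le_mul_of_one_le_of_one_le (one_le_pow₀ one_le_two) (by simp))
  have : 0 ≤ 2 ^ (d + 1) * C * B := by positivity
  nlinarith [mul_le_mul_of_nonneg_right hD hB]

theorem add_mul_le_countingConst_mul_pow {α ε : ℝ} (hC : 0 ≤ C) (hB : 0 ≤ B) (hα : 0 ≤ α)
    (hαle : α ≤ B + 2 ^ (d + 1) * C) (hε : 0 ≤ ε) (hε2 : ε ≤ 1 / 2) :
    α + B * ε ≤ (α + countingConst d C * (B + 1) * ε) * (1 - ε) ^ d := by
  have hbernoulli : 1 - d * ε ≤ (1 - ε) ^ d := by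
    simpa [sub_eq_add_neg] using one_add_mul_le_pow (a := -ε) (by linarith) d
  have hhalf : (1 / 2 : ℝ) ^ d ≤ (1 - ε) ^ d := pow_le_pow_left₀ (by norm_num) (by linarith) d
  have hD : countingConst d C * (1 / 2) ^ d = (d + 1) * (2 ^ (d + 1) * C + 1) := by
    unfold countingConst; rw [one_div, inv_pow]; field_simp
  have hkey : α * d + B ≤ (d + 1) * (2 ^ (d + 1) * C + 1) * (B + 1) := by
    have : α * d ≤ (B + 2 ^ (d + 1) * C) * d := by gcongr
    have : 0 ≤ 2 ^ (d + 1) * C * B * d := by positivity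
    have : 0 ≤ 2 ^ (d + 1) * C * B := by positivity
    have : 0 ≤ 2 ^ (d + 1) * C := by positivity
    have : (0 : ℝ) ≤ d := d.cast_nonneg
    nlinarith
  calc α + B * ε = α * (1 - d * ε) + (α * d + B) * ε := by ring
    _ ≤ α * (1 - ε) ^ d + countingConst d C * (1 / 2) ^ d * (B + 1) * ε := by
        rw [hD]; gcongr
    _ ≤ α * (1 - ε) ^ d + countingConst d C * (1 - ε) ^ d * (B + 1) * ε := by
        gcongr
        exact (countingConst_pos hC).le
    _ = (α + countingConst d C * (B + 1) * ε) * (1 - ε) ^ d := by ring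

theorem le_add_two_pow_succ_mul {α ε T N : ℝ} (hC : 0 ≤ C) (hB : 0 ≤ B) (hε2 : ε ≤ 1 / 2)
    (hT : α - B * ε ≤ T) (hTN : T ≤ N + 2 ^ (d + 1) * C * ε) (hN : N ≤ C) :
    α ≤ B + 2 ^ (d + 1) * C := by
  have hC2 : C ≤ 2 ^ d * C := le_mul_of_one_le_left hC (one_le_pow₀ one_le_two)
  have hBε : B * ε ≤ B := mul_le_of_le_one_right hB (by linarith)
  have hCε : 2 ^ (d + 1) * C * ε ≤ 2 ^ d * C := by
    rw [pow_succ]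
    nlinarith [mul_nonneg (by positivity : (0 : ℝ) ≤ 2 ^ d * C) (by linarith : 0 ≤ 1 - 2 * ε)]
  rw [pow_succ]
  linarith

end Constant

theorem pow_mul_le_inv_mul_sqrt_pow {d : ℕ} {ε t X Y E : ℝ} (hε1 : ε < 1) (ht : 0 < t)
    (hX : (1 - ε) * X ≤ Y) (hY : (t * √(1 - ε)) ^ d * Y ≤ E * (1 - ε) ^ d) :
    t ^ d * X ≤ (1 - ε)⁻¹ * E * √(1 - ε) ^ d := by
  have h1ε : 0 < 1 - ε := sub_pos.2 hε1
  have hq : 0 < √(1 - ε) ^ d := pow_pos (Real.sqrt_pos.2 h1ε) d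
  have hq2 : (1 - ε) ^ d = √(1 - ε) ^ d * √(1 - ε) ^ d := by
    rw [← mul_pow, Real.mul_self_sqrt h1ε.le]
  rw [mul_assoc, inv_mul_eq_div, le_div_iff₀ h1ε]
  refine le_of_mul_le_mul_right ?_ hq
  calc t ^ d * X * (1 - ε) * √(1 - ε) ^ d = (t * √(1 - ε)) ^ d * ((1 - ε) * X) := by ring
    _ ≤ (t * √(1 - ε)) ^ d * Y := by gcongr
    _ ≤ E * √(1 - ε) ^ d * √(1 - ε) ^ d := by rw [mul_assoc, ← hq2]; exact hY

theorem stmt16_general (d : ℕ) (C : ℝ) (hC : 0 < C) :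
    ∃ D : ℝ, 0 < D ∧
      ∀ (ι : Type) (_ : Countable ι) (nrm : ι → ℝ), (∀ ν, 0 ≤ nrm ν) →
        ∀ ε : ℝ, 0 < ε → ε < 1 / 2 →
        ∀ α : ℝ, 0 < α → ∀ B : ℝ, 0 < B →
        ∀ h : ℝ → ℝ, (∀ s : ℝ, 0 ≤ s → 0 ≤ h s ∧ h s ≤ 1) →
        (∀ s : ℝ, 0 ≤ s → s ≤ Real.sqrt (1 - ε) → 1 - ε ≤ h s) →
        (∀ s : ℝ, 1 ≤ s → h s ≤ ε / (1 + s) ^ (d + 1)) →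
        (∀ R : ℝ, 1 ≤ R → {ν : ι | nrm ν ≤ R}.Finite) →
        (∀ R : ℝ, 1 ≤ R → ({ν : ι | nrm ν ≤ R}.ncard : ℝ) ≤ C * R ^ d) →
        (∃ t₀ : ℝ, 0 < t₀ ∧ ∀ t : ℝ, 0 < t → t < t₀ →
          |t ^ d * (∑' ν : ι, h (t * nrm ν)) - α| ≤ B * ε) →
        ∃ t₁ : ℝ, 0 < t₁ ∧ ∀ t : ℝ, 0 < t → t < t₁ →
          α - D * (B + 1) * ε ≤ t ^ d * ({ν : ι | nrm ν < 1 / t}.ncard : ℝ) ∧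
          t ^ d * ({ν : ι | nrm ν < 1 / t}.ncard : ℝ) ≤
            (1 - ε)⁻¹ * (α + D * (B + 1) * ε) * Real.sqrt (1 - ε) ^ d := by
  refine ⟨countingConst d C, countingConst_pos hC.le, ?_⟩
  intro ι _ nrm hnrm ε hε hε2 α hα B hB h hh hlow hdecay hfin hcount ⟨t₀, ht₀, hasymp⟩
  refine ⟨min t₀ 1, lt_min ht₀ one_pos, fun t ht htt₁ ↦ ?_⟩
  have htt₀ : t < t₀ := htt₁.trans_le (min_le_left _ _)
  have ht1 : t ≤ 1 := (htt₁.trans_le (min_le_right _ _)).le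
  have hT := abs_le.1 (hasymp t ht htt₀)
  have hsplit := pow_mul_tsum_le hfin hcount hnrm hε.le (fun s hs ↦ (hh s hs).2) hdecay ht ht1
  have hαle : α ≤ B + 2 ^ (d + 1) * C := le_add_two_pow_succ_mul hC.le hB.le hε2.le
    (by linarith) hsplit (pow_mul_ncard_le hfin hcount ht ht1)
  refine ⟨?_, pow_mul_le_inv_mul_sqrt_pow (by linarith) ht
    (one_sub_mul_ncard_le_tsum hfin hcount hnrm hε.le (by linarith) hh hlow hdecay ht ht1) ?_⟩
  · have := mul_le_mul_of_nonneg_right (add_le_countingConst_mul (d := d) hC.le hB.le) hε.le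
    linarith
  · have hs : t * √(1 - ε) < t₀ :=
      (mul_le_of_le_one_right ht.le (Real.sqrt_le_one.2 (by linarith))).trans_lt htt₀
    have hTs := (abs_le.1 (hasymp _ (mul_pos ht (Real.sqrt_pos.2 (by linarith))) hs)).2
    have := add_mul_le_countingConst_mul_pow hC.le hB.le hα.le hαle hε.le hε2.le
    linarith

/-- Counting from smoothed counts. Suppose `h : [0,∞) → [0,1]` with
`h(s) ≥ 1−ε` for `0 ≤ s ≤ √(1−ε)` and `h(s) ≤ ε(1+s)^{−(d+1)}` for `s ≥ 1`, the
counting function satisfies `#{ν : ‖ν‖ ≤ R} ≤ C R^d` for `R ≥ 1`, and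
`∑_ν h(t‖ν‖) = (α + O(ε)) t^{−d}` (with constant `B`) as `t → 0`. Then for all
sufficiently small `t`,
`(α − O(ε)) t^{−d} ≤ #{ν : ‖ν‖ < 1/t} ≤ (1−ε)^{−1}(α + O(ε)) (t/√(1−ε))^{−d}`,
with implied constants depending only on `C, d` (times `B+1`). -/
theorem stmt16 (d : ℕ) (hd : 1 ≤ d) (C : ℝ) (hC : 0 < C) :
    ∃ D : ℝ, 0 < D ∧
      ∀ (ι : Type) (_ : Countable ι) (nrm : ι → ℝ), (∀ ν, 0 ≤ nrm ν) →
        ∀ ε : ℝ, 0 < ε → ε < 1 / 2 →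
        ∀ α : ℝ, 0 < α → ∀ B : ℝ, 0 < B →
        ∀ h : ℝ → ℝ, (∀ s : ℝ, 0 ≤ s → 0 ≤ h s ∧ h s ≤ 1) →
        (∀ s : ℝ, 0 ≤ s → s ≤ Real.sqrt (1 - ε) → 1 - ε ≤ h s) →
        (∀ s : ℝ, 1 ≤ s → h s ≤ ε / (1 + s) ^ (d + 1)) →
        (∀ R : ℝ, 1 ≤ R → {ν : ι | nrm ν ≤ R}.Finite) →
        (∀ R : ℝ, 1 ≤ R → ({ν : ι | nrm ν ≤ R}.ncard : ℝ) ≤ C * R ^ d) →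
        (∃ t₀ : ℝ, 0 < t₀ ∧ ∀ t : ℝ, 0 < t → t < t₀ →
          |t ^ d * (∑' ν : ι, h (t * nrm ν)) - α| ≤ B * ε) →
        ∃ t₁ : ℝ, 0 < t₁ ∧ ∀ t : ℝ, 0 < t → t < t₁ →
          α - D * (B + 1) * ε ≤ t ^ d * ({ν : ι | nrm ν < 1 / t}.ncard : ℝ) ∧
          t ^ d * ({ν : ι | nrm ν < 1 / t}.ncard : ℝ) ≤
            (1 - ε)⁻¹ * (α + D * (B + 1) * ε) * Real.sqrt (1 - ε) ^ d :=
  stmt16_general d C hC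
end
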